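/- arXiv:2303.13021 — 2 statements merged into one kernel-verified Lean document; each statement's English description precedes it below -/
import Mathlib

section
/- Let F : ℝ₊ × ℝ × ℝ³ → ℝ satisfy sup_v (1+|v|)^{β-1} |F(s,x,v)| ≤ C₁ (1+s)^{-α} B_γ(s, x - λ s) for constants α, γ ≥ 0, λ ∈ ℝ, where B_γ(s,z) = (1 + |z|²/(1+s))^{-γ}. Let ν(v) ≥ ν₀(1+|v|) and S^t g(x,v) = e^{-ν(v)t} g(x - v₁ t, v). Then there exists C > 0 such that sup_v (1+|v|)^β |∫₀^t S^{t-s} F(s,·,·) ds (x,v)| ≤ C (1+t)^{-α} B_γ(t, x - λ t) for all t ≥ 0 and x ∈ ℝ. -/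
/-!
Fix `0 ≤ s ≤ t`, put `τ = t - s` and `W = 1 + |v|`. Along the characteristic, the source at time
`s` is compared with the profile at time `t`: `(1 + s)^(-α) ≤ (1 + τ)^α (1 + t)^(-α)`, and
`B_γ(s, z + b) ≤ (2 (1 + b²))^γ B_γ(t, z)` for the shift `b = (λ - v₁) τ`, which is at most
`(1 + |λ|) W τ`. The resulting polynomial loss in `W τ` is absorbed by half of the damping
`e^{-ν₀ W τ}`, and the remaining kernel `W e^{-ν₀ W τ / 2}` has time integral at most `2 / ν₀`
uniformly in `v`; this is where the extra velocity weight is gained.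
-/

open Real

/-- The profile `B_γ(s, z)`. -/
noncomputable def diffusiveWave (γ s z : ℝ) : ℝ := (1 + z ^ 2 / (1 + s)) ^ (-γ)

lemma diffusiveWave_nonneg (γ : ℝ) {s : ℝ} (hs : 0 ≤ s) (z : ℝ) : 0 ≤ diffusiveWave γ s z := by
  unfold diffusiveWave; positivity

lemma rpow_neg_le_mul_rpow_neg {x y z γ : ℝ} (hγ : 0 ≤ γ) (hx : 0 < x) (hy : 0 < y) (hz : 0 < z)
    (h : y ≤ x * z) : x ^ (-γ) ≤ z ^ γ * y ^ (-γ) :=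
  calc x ^ (-γ) = z ^ γ * (x * z) ^ (-γ) := by
        rw [mul_rpow hx.le hz.le, rpow_neg hz.le, mul_left_comm, mul_inv_cancel₀ (by positivity),
          mul_one]
    _ ≤ z ^ γ * y ^ (-γ) :=
        mul_le_mul_of_nonneg_left (rpow_le_rpow_of_nonpos hy h (neg_nonpos.2 hγ)) (by positivity)

lemma one_add_rpow_neg_le {α s t : ℝ} (hα : 0 ≤ α) (hs : 0 ≤ s) (hst : s ≤ t) :
    (1 + s) ^ (-α) ≤ (1 + (t - s)) ^ α * (1 + t) ^ (-α) :=
  rpow_neg_le_mul_rpow_neg hα (by linarith) (by linarith) (by linarith)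
    (by nlinarith [mul_nonneg hs (sub_nonneg.2 hst)])

lemma diffusiveWave_add_le {γ s t : ℝ} (hγ : 0 ≤ γ) (hs : 0 ≤ s) (hst : s ≤ t) (z b : ℝ) :
    diffusiveWave γ s (z + b) ≤ (2 * (1 + b ^ 2)) ^ γ * diffusiveWave γ t z := by
  have hs' : 0 < 1 + s := by linarith
  have ht' : 0 < 1 + t := by linarith
  have hq : 0 ≤ (z + b) ^ 2 / (1 + s) := by positivity
  have hshift : z ^ 2 / (1 + t) ≤ 2 * ((z + b) ^ 2 / (1 + s)) + 2 * b ^ 2 := by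
    have h1 : (z + b) ^ 2 ≤ (z + b) ^ 2 / (1 + s) * (1 + t) := by
      rw [div_mul_eq_mul_div, le_div_iff₀ hs']
      gcongr
    rw [div_le_iff₀ ht']
    nlinarith [sq_nonneg (z + 2 * b), sq_nonneg b, mul_nonneg (sq_nonneg b) (by linarith : 0 ≤ t)]
  exact rpow_neg_le_mul_rpow_neg hγ (by positivity) (by positivity) (by positivity)
    (by nlinarith [mul_nonneg hq (sq_nonneg b)])

lemma one_add_rpow_mul_rpow_le {α γ L W τ b : ℝ} (hα : 0 ≤ α) (hγ : 0 ≤ γ) (hL : 0 ≤ L)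
    (hW : 1 ≤ W) (hτ : 0 ≤ τ) (hb : |b| ≤ L * (W * τ)) :
    (1 + τ) ^ α * (2 * (1 + b ^ 2)) ^ γ ≤ (2 * (1 + L) ^ 2) ^ γ * (1 + W * τ) ^ (α + 2 * γ) := by
  have hu : 0 ≤ W * τ := by positivity
  have hτu : 1 + τ ≤ 1 + W * τ := by nlinarith
  have hbu : 1 + b ^ 2 ≤ (1 + L) ^ 2 * (1 + W * τ) ^ 2 := by
    have : 1 + |b| ≤ (1 + L) * (1 + W * τ) := by nlinarith [mul_nonneg hL hu]
    nlinarith [sq_abs b, abs_nonneg b]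
  calc (1 + τ) ^ α * (2 * (1 + b ^ 2)) ^ γ
      ≤ (1 + W * τ) ^ α * (2 * ((1 + L) ^ 2 * (1 + W * τ) ^ 2)) ^ γ := by
        gcongr
    _ = (2 * (1 + L) ^ 2) ^ γ * (1 + W * τ) ^ (α + 2 * γ) := by
        rw [← mul_assoc, mul_rpow (by positivity) (by positivity), rpow_add (by positivity),
          ← rpow_natCast (1 + W * τ) 2, ← rpow_mul (by positivity)]
        push_cast
        ring

lemma one_add_le_mul_exp {κ u : ℝ} (hκ : 0 < κ) (hu : 0 ≤ u) : 1 + u ≤ (1 + κ) * exp (u / κ) := by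
  have h1 : u / κ + 1 ≤ exp (u / κ) := add_one_le_exp _
  have h2 : 1 ≤ exp (u / κ) := one_le_exp (by positivity)
  have h3 : u = κ * (u / κ) := by field_simp
  nlinarith

lemma one_add_rpow_le_mul_exp {m c u : ℝ} (hm : 0 ≤ m) (hc : 0 < c) (hu : 0 ≤ u) :
    (1 + u) ^ m ≤ (1 + (m + 1) / c) ^ m * exp (c * u) := by
  have hκ : 0 < (m + 1) / c := by positivity
  calc (1 + u) ^ m ≤ ((1 + (m + 1) / c) * exp (u / ((m + 1) / c))) ^ m :=
        rpow_le_rpow (by linarith) (one_add_le_mul_exp hκ hu) hm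
    _ = (1 + (m + 1) / c) ^ m * exp (m / (m + 1) * (c * u)) := by
        rw [mul_rpow (by positivity) (exp_pos _).le, ← exp_mul]
        congr 2
        field_simp
    _ ≤ (1 + (m + 1) / c) ^ m * exp (c * u) := by
        refine mul_le_mul_of_nonneg_left (exp_le_exp.2 ?_) (by positivity)
        exact mul_le_of_le_one_left (by positivity) ((div_le_one (by linarith)).2 (by linarith))

lemma integral_mul_exp_neg_mul_sub (c t : ℝ) :
    ∫ s in (0:ℝ)..t, c * exp (-(c * (t - s))) = 1 - exp (-(c * t)) := by
  have hderiv : ∀ s ∈ Set.uIcc (0:ℝ) t,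
      HasDerivAt (fun s => exp (-(c * (t - s)))) (c * exp (-(c * (t - s)))) s := by
    intro s _
    have h : HasDerivAt (fun s => -(c * (t - s))) c s := by
      simpa using (((hasDerivAt_const s t).sub (hasDerivAt_id s)).const_mul c).fun_neg
    simpa [mul_comm] using h.exp
  rw [intervalIntegral.integral_eq_sub_of_hasDerivAt hderiv (by apply Continuous.intervalIntegrable; fun_prop)]
  simp

lemma mul_abs_integral_le_of_le_mul_exp {f : ℝ → ℝ} {w c t K : ℝ} (hw : 0 < w) (ht : 0 ≤ t)
    (hK : 0 ≤ K) (hf : ∀ s ∈ Set.Ioc 0 t, w * |f s| ≤ K * (c * exp (-(c * (t - s))))) :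
    w * |∫ s in (0:ℝ)..t, f s| ≤ K := by
  have hint : |∫ s in (0:ℝ)..t, f s| ≤ ∫ s in (0:ℝ)..t, K / w * (c * exp (-(c * (t - s)))) := by
    rw [← norm_eq_abs]
    refine intervalIntegral.norm_integral_le_of_norm_le ht
      (Filter.Eventually.of_forall fun s hs => ?_) ?_
    · rw [norm_eq_abs, div_mul_eq_mul_div, le_div_iff₀' hw]
      exact hf s hs
    · exact Continuous.intervalIntegrable (by fun_prop) _ _
  rw [intervalIntegral.integral_const_mul, integral_mul_exp_neg_mul_sub] at hint
  calc w * |∫ s in (0:ℝ)..t, f s| ≤ w * (K / w * (1 - exp (-(c * t)))) := by gcongr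
    _ ≤ w * (K / w) := by
        gcongr
        exact mul_le_of_le_one_right (by positivity) (by linarith [exp_pos (-(c * t))])
    _ = K := by field_simp

lemma mul_exp_neg_mul_one_add_rpow_le {m ν₀ W τ : ℝ} (hm : 0 ≤ m) (hν₀ : 0 < ν₀) (hW : 0 ≤ W)
    (hτ : 0 ≤ τ) :
    W * exp (-(ν₀ * W * τ)) * (1 + W * τ) ^ m
      ≤ (1 + (m + 1) / (ν₀ / 2)) ^ m * (2 / ν₀) * (ν₀ / 2 * W * exp (-(ν₀ / 2 * W * τ))) :=
  calc W * exp (-(ν₀ * W * τ)) * (1 + W * τ) ^ m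
      ≤ W * exp (-(ν₀ * W * τ)) * ((1 + (m + 1) / (ν₀ / 2)) ^ m * exp (ν₀ / 2 * (W * τ))) := by
        gcongr
        exact one_add_rpow_le_mul_exp hm (by positivity) (by positivity)
    _ = (1 + (m + 1) / (ν₀ / 2)) ^ m * (2 / ν₀) * (ν₀ / 2 * W * exp (-(ν₀ / 2 * W * τ))) := by
        rw [show -(ν₀ * W * τ) = -(ν₀ / 2 * W * τ) + -(ν₀ / 2 * (W * τ)) by ring, exp_add,
          exp_neg (ν₀ / 2 * (W * τ))]
        field_simp

lemma weighted_integrand_le {ν₀ W νv v₁ lam α γ β C₁ s t x f : ℝ} (hW : 1 ≤ W) (hv₁ : |v₁| ≤ W)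
    (hνv : ν₀ * W ≤ νv) (hα : 0 ≤ α) (hγ : 0 ≤ γ) (hC₁ : 0 ≤ C₁) (hs : 0 ≤ s) (hst : s ≤ t)
    (hf : W ^ (β - 1) * |f|
      ≤ C₁ * (1 + s) ^ (-α) * diffusiveWave γ s (x - v₁ * (t - s) - lam * s)) :
    W ^ β * |exp (-νv * (t - s)) * f|
      ≤ C₁ * (1 + t) ^ (-α) * diffusiveWave γ t (x - lam * t)
        * ((2 * (1 + (1 + |lam|)) ^ 2) ^ γ
          * (W * exp (-(ν₀ * W * (t - s))) * (1 + W * (t - s)) ^ (α + 2 * γ))) := by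
  have ht : 0 ≤ t := hs.trans hst
  have hτ : 0 ≤ t - s := sub_nonneg.2 hst
  set b := (lam - v₁) * (t - s)
  have hb : |b| ≤ (1 + |lam|) * (W * (t - s)) := by
    rw [abs_mul, abs_of_nonneg hτ, ← mul_assoc]
    gcongr
    nlinarith [abs_sub lam v₁, abs_nonneg lam]
  have hshift : x - v₁ * (t - s) - lam * s = x - lam * t + b := by ring
  have hW' : (W : ℝ) ≠ 0 := by positivity
  calc W ^ β * |exp (-νv * (t - s)) * f|
      = W * exp (-νv * (t - s)) * (W ^ (β - 1) * |f|) := by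
        rw [abs_mul, abs_exp, rpow_sub_one hW']
        field_simp
    _ ≤ W * exp (-(ν₀ * W * (t - s)))
          * (C₁ * ((1 + (t - s)) ^ α * (1 + t) ^ (-α)
            * ((2 * (1 + b ^ 2)) ^ γ * diffusiveWave γ t (x - lam * t)))) := by
        rw [hshift, mul_assoc] at hf
        refine mul_le_mul (by gcongr; nlinarith) (hf.trans ?_) (by positivity) (by positivity)
        exact mul_le_mul_of_nonneg_left (mul_le_mul (one_add_rpow_neg_le hα hs hst)
          (diffusiveWave_add_le hγ hs hst _ _) (diffusiveWave_nonneg γ hs _)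
          (mul_nonneg (rpow_nonneg (by linarith) _) (by positivity))) hC₁
    _ = C₁ * (1 + t) ^ (-α) * diffusiveWave γ t (x - lam * t)
          * (W * exp (-(ν₀ * W * (t - s))) * ((1 + (t - s)) ^ α * (2 * (1 + b ^ 2)) ^ γ)) := by
        ring
    _ ≤ C₁ * (1 + t) ^ (-α) * diffusiveWave γ t (x - lam * t)
          * (W * exp (-(ν₀ * W * (t - s)))
            * ((2 * (1 + (1 + |lam|)) ^ 2) ^ γ * (1 + W * (t - s)) ^ (α + 2 * γ))) := by
        refine mul_le_mul_of_nonneg_left (mul_le_mul_of_nonneg_left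
          (one_add_rpow_mul_rpow_le hα hγ (by positivity) hW hτ hb) (by positivity)) ?_
        exact mul_nonneg (by positivity) (diffusiveWave_nonneg γ ht _)
    _ = _ := by ring

theorem stmt10 (ν : EuclideanSpace ℝ (Fin 3) → ℝ) (ν₀ : ℝ) (hν₀ : 0 < ν₀)
    (hν : ∀ v, ν₀ * (1 + ‖v‖) ≤ ν v)
    (F : ℝ → ℝ → EuclideanSpace ℝ (Fin 3) → ℝ)
    (α γ lam β C₁ : ℝ) (hα : 0 ≤ α) (hγ : 0 ≤ γ) (hC₁ : 0 < C₁)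
    (hF : ∀ s ≥ (0:ℝ), ∀ x : ℝ, ∀ v,
      (1 + ‖v‖) ^ (β - 1) * |F s x v|
        ≤ C₁ * (1 + s) ^ (-α) * (1 + (x - lam * s) ^ 2 / (1 + s)) ^ (-γ)) :
    ∃ C > (0:ℝ), ∀ t ≥ (0:ℝ), ∀ x : ℝ, ∀ v,
      (1 + ‖v‖) ^ β
          * |∫ s in (0:ℝ)..t, Real.exp (-ν v * (t - s)) * F s (x - v 0 * (t - s)) v|
        ≤ C * (1 + t) ^ (-α) * (1 + (x - lam * t) ^ 2 / (1 + t)) ^ (-γ) := by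
  set m := α + 2 * γ
  refine ⟨C₁ * ((2 * (1 + (1 + |lam|)) ^ 2) ^ γ * ((1 + (m + 1) / (ν₀ / 2)) ^ m * (2 / ν₀))),
    by positivity, fun t ht x v => ?_⟩
  have hW : 1 ≤ 1 + ‖v‖ := le_add_of_nonneg_right (norm_nonneg v)
  have hv₀ : |v 0| ≤ 1 + ‖v‖ :=
    (PiLp.norm_apply_le v 0).trans (le_add_of_nonneg_left zero_le_one)
  refine mul_abs_integral_le_of_le_mul_exp (c := ν₀ / 2 * (1 + ‖v‖)) (by positivity) ht
    (by positivity) fun s hs => ?_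
  calc (1 + ‖v‖) ^ β * |exp (-ν v * (t - s)) * F s (x - v 0 * (t - s)) v|
      ≤ C₁ * (1 + t) ^ (-α) * diffusiveWave γ t (x - lam * t)
        * ((2 * (1 + (1 + |lam|)) ^ 2) ^ γ
          * ((1 + ‖v‖) * exp (-(ν₀ * (1 + ‖v‖) * (t - s))) * (1 + (1 + ‖v‖) * (t - s)) ^ m)) :=
        weighted_integrand_le hW hv₀ (hν v) hα hγ hC₁.le hs.1.le hs.2 (hF s hs.1.le _ v)
    _ ≤ C₁ * (1 + t) ^ (-α) * diffusiveWave γ t (x - lam * t)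
        * ((2 * (1 + (1 + |lam|)) ^ 2) ^ γ * ((1 + (m + 1) / (ν₀ / 2)) ^ m * (2 / ν₀)
          * (ν₀ / 2 * (1 + ‖v‖) * exp (-(ν₀ / 2 * (1 + ‖v‖) * (t - s)))))) := by
        refine mul_le_mul_of_nonneg_left (mul_le_mul_of_nonneg_left
          (mul_exp_neg_mul_one_add_rpow_le (by positivity) hν₀ (by positivity)
            (sub_nonneg.2 hs.2)) (by positivity)) ?_
        exact mul_nonneg (by positivity) (diffusiveWave_nonneg γ ht _)
    _ = _ := by unfold diffusiveWave; ring
end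

section
/- Let λ = μ ∈ ℝ, D > 0, α ≥ 0, β ≥ 1, γ > 1/2. Then there is C > 0 such that for all t ≥ 0 and x ∈ ℝ, ∫₀^{t/2} ∫_ℝ (1+t-s)^{-α} e^{-|x-y-λ(t-s)|²/(D(1+t-s))} (1+s)^{-β} B_γ(s, y - λ s) dy ds ≤ C (1+t)^{-α} B_γ(t, x - λ t) T^{β - 1/2}(t), where T^k(t) = ∫₀^t (1+s)^{-k} ds and B_γ(s,z) = (1+|z|²/(1+s))^{-γ}. -/
open MeasureTheory Real

/-! In the frame `w = y - lam * s` moving with the waves, the `y`-integral is the convolution of a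
Gaussian of variance at most `D (1 + t)` with the profile `(1 + w² / (1 + s))^(-γ)`, whose mass is
`√(1 + s) ∫ (1 + u²)^(-γ)` (finite as `2γ > 1`). This convolution is `≤ K √(1 + s) B_γ(t, z)` with
`z = x - lam * t`: for `z² ≤ 1 + t` it is bounded by the mass of the profile, and otherwise we split
at `|w| = |z| / 2`, so that either the profile is `≤ (1 + z² / (4 (1 + s)))^(-γ)` or the Gaussian is
`≤ exp (-z² / (4 D (1 + t)))`, which decays faster than any power of `z² / (1 + t)`. For
`s ≤ t / 2` the weight `(1 + t - s)^(-α)` is at most `2^α (1 + t)^(-α)`, and what remains in `s` is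
`√(1 + s) (1 + s)^(-β) = (1 + s)^(-(β - 1/2))`. -/

lemma integrable_one_add_sq_rpow_neg {γ : ℝ} (hγ : 1 / 2 < γ) :
    Integrable (fun u : ℝ => (1 + u ^ 2) ^ (-γ)) := by
  have h := integrable_rpow_neg_one_add_norm_sq (E := ℝ) (μ := volume) (r := 2 * γ)
    (by norm_num; linarith)
  refine h.congr (ae_of_all _ fun u => ?_)
  simp only [Real.norm_eq_abs, sq_abs]
  ring_nf

lemma one_add_sq_div_eq_one_add_inv_sqrt_mul_sq {a : ℝ} (ha : 0 ≤ a) (w : ℝ) :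
    1 + w ^ 2 / a = 1 + ((√a)⁻¹ * w) ^ 2 := by
  rw [mul_pow, inv_pow, sq_sqrt ha, div_eq_inv_mul]

lemma integrable_one_add_sq_div_rpow_neg {γ a : ℝ} (hγ : 1 / 2 < γ) (ha : 0 < a) :
    Integrable (fun w : ℝ => (1 + w ^ 2 / a) ^ (-γ)) := by
  simp_rw [one_add_sq_div_eq_one_add_inv_sqrt_mul_sq ha.le]
  exact (integrable_one_add_sq_rpow_neg hγ).comp_mul_left' (by positivity)

lemma integral_one_add_sq_div_rpow_neg (γ : ℝ) {a : ℝ} (ha : 0 < a) :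
    ∫ w : ℝ, (1 + w ^ 2 / a) ^ (-γ) = √a * ∫ u : ℝ, (1 + u ^ 2) ^ (-γ) := by
  simp_rw [one_add_sq_div_eq_one_add_inv_sqrt_mul_sq ha.le]
  rw [Measure.integral_comp_mul_left (fun u : ℝ => (1 + u ^ 2) ^ (-γ)), inv_inv,
    abs_of_pos (sqrt_pos.mpr ha), smul_eq_mul]

lemma exp_neg_sub_sq_div_eq_exp_neg_inv_mul_sq (c z w : ℝ) :
    exp (-(z - w) ^ 2 / c) = exp (-c⁻¹ * (w - z) ^ 2) := by
  congr 1
  ring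

lemma integrable_exp_neg_sub_sq_div {c : ℝ} (hc : 0 < c) (z : ℝ) :
    Integrable (fun w : ℝ => exp (-(z - w) ^ 2 / c)) := by
  simp_rw [exp_neg_sub_sq_div_eq_exp_neg_inv_mul_sq c z]
  exact (integrable_exp_neg_mul_sq (inv_pos.mpr hc)).comp_sub_right z

lemma integral_exp_neg_sub_sq_div (c z : ℝ) : ∫ w : ℝ, exp (-(z - w) ^ 2 / c) = √(π * c) := by
  simp_rw [exp_neg_sub_sq_div_eq_exp_neg_inv_mul_sq c z]
  rw [integral_sub_right_eq_self (fun u : ℝ => exp (-c⁻¹ * u ^ 2)) z, integral_gaussian,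
    div_inv_eq_mul]

lemma exists_exp_neg_div_le_mul_rpow_neg {d : ℝ} (hd : 0 < d) (γ : ℝ) :
    ∃ C > 0, ∀ u ≥ (0 : ℝ), exp (-(u / d)) ≤ C * (1 + u) ^ (-γ) := by
  obtain ⟨n, hn⟩ := exists_nat_ge γ
  set N : ℝ := n + 1
  have hN : 0 < N * d := by positivity
  have hN0 : N ≠ 0 := by positivity
  refine ⟨(1 + N * d) ^ (n + 1), by positivity, fun u hu => ?_⟩
  have hlin : 1 + u ≤ (1 + N * d) * (1 + u / (N * d)) := by
    have hexpand : (1 + N * d) * (1 + u / (N * d)) = 1 + u + N * d + u / (N * d) := by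
      field_simp [hN0, hd.ne']
      ring
    rw [hexpand]
    have : 0 ≤ u / (N * d) := by positivity
    linarith
  have hexp : (1 + u / (N * d)) ^ (n + 1) ≤ exp (u / d) := by
    calc (1 + u / (N * d)) ^ (n + 1) ≤ exp (u / (N * d)) ^ (n + 1) := by
          gcongr
          linarith [add_one_le_exp (u / (N * d))]
      _ = exp (u / d) := by
          rw [← exp_nat_mul]
          congr 1
          simp only [N, Nat.cast_add_one]
          field_simp
  have hpow : (1 + u) ^ γ ≤ (1 + N * d) ^ (n + 1) * exp (u / d) := by
    calc (1 + u) ^ γ ≤ (1 + u) ^ ((n + 1 : ℕ) : ℝ) :=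
          rpow_le_rpow_of_exponent_le (by linarith) (by push_cast; linarith)
      _ = (1 + u) ^ (n + 1) := rpow_natCast _ _
      _ ≤ ((1 + N * d) * (1 + u / (N * d))) ^ (n + 1) := by gcongr
      _ ≤ (1 + N * d) ^ (n + 1) * exp (u / d) := by
          rw [mul_pow]
          gcongr
  rw [exp_neg, rpow_neg (by linarith), ← div_eq_mul_inv, le_div_iff₀ (by positivity),
    inv_mul_le_iff₀ (exp_pos _), mul_comm]
  exact hpow

lemma exp_mul_rpow_neg_le_add {γ a c : ℝ} (hγ : 0 ≤ γ) (ha : 0 < a) (hc : 0 < c) (z w : ℝ) :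
    exp (-(z - w) ^ 2 / c) * (1 + w ^ 2 / a) ^ (-γ)
      ≤ (1 + z ^ 2 / (4 * a)) ^ (-γ) * exp (-(z - w) ^ 2 / c)
        + exp (-(z ^ 2 / (4 * c))) * (1 + w ^ 2 / a) ^ (-γ) := by
  -- either `|w| ≥ |z| / 2` or `|z - w| ≥ |z| / 2`
  rcases le_or_gt (z ^ 2) (4 * w ^ 2) with hw | hw
  · have hbase : 1 + z ^ 2 / (4 * a) ≤ 1 + w ^ 2 / a := by
      rw [add_le_add_iff_left, div_le_div_iff₀ (by positivity) ha]
      nlinarith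
    have : (1 + w ^ 2 / a) ^ (-γ) ≤ (1 + z ^ 2 / (4 * a)) ^ (-γ) :=
      rpow_le_rpow_of_nonpos (by positivity) hbase (by linarith)
    nlinarith [exp_pos (-(z - w) ^ 2 / c), exp_pos (-(z ^ 2 / (4 * c))),
      rpow_nonneg (by positivity : (0 : ℝ) ≤ 1 + w ^ 2 / a) (-γ)]
  · have hzw : z ^ 2 / (4 * c) ≤ (z - w) ^ 2 / c := by
      rw [div_le_div_iff₀ (by positivity) hc]
      nlinarith [sq_nonneg (z - 2 * w)]
    have : exp (-(z - w) ^ 2 / c) ≤ exp (-(z ^ 2 / (4 * c))) := by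
      rw [exp_le_exp, neg_div]
      linarith
    nlinarith [exp_pos (-(z - w) ^ 2 / c),
      rpow_nonneg (by positivity : (0 : ℝ) ≤ 1 + w ^ 2 / a) (-γ),
      rpow_nonneg (by positivity : (0 : ℝ) ≤ 1 + z ^ 2 / (4 * a)) (-γ)]

lemma one_add_div_rpow_neg_mul_sqrt_le {γ a τ q : ℝ} (hγ : 1 / 2 ≤ γ) (ha : 0 < a) (haτ : a ≤ τ)
    (hτq : τ ≤ q) :
    (1 + q / (4 * a)) ^ (-γ) * √τ ≤ 8 ^ γ * √a * (1 + q / τ) ^ (-γ) := by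
  have hτ : 0 < τ := ha.trans_le haτ
  have hq : 0 < q := hτ.trans_le hτq
  have hlower : (4 * a / q) ^ γ = 8 ^ γ * (a / τ) ^ γ * (τ / (2 * q)) ^ γ := by
    rw [← mul_rpow (by norm_num) (by positivity), ← mul_rpow (by positivity) (by positivity)]
    congr 1
    field_simp
    ring
  have hsmall : (a / τ) ^ γ * √τ ≤ √a := by
    calc (a / τ) ^ γ * √τ ≤ (a / τ) ^ (1 / 2 : ℝ) * √τ := by
          refine mul_le_mul_of_nonneg_right ?_ (sqrt_nonneg _)
          exact rpow_le_rpow_of_exponent_ge (by positivity) (div_le_one_of_le₀ haτ hτ.le) hγ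
      _ = √a := by
          rw [← sqrt_eq_rpow, ← sqrt_mul (by positivity), div_mul_cancel₀ _ hτ.ne']
  have hupper : (τ / (2 * q)) ^ γ ≤ (1 + q / τ) ^ (-γ) := by
    rw [← inv_div, inv_rpow (by positivity), ← rpow_neg (by positivity)]
    refine rpow_le_rpow_of_nonpos (by positivity) ?_ (by linarith)
    rw [add_div' _ _ _ hτ.ne', div_le_div_iff_of_pos_right hτ]
    linarith
  calc (1 + q / (4 * a)) ^ (-γ) * √τ ≤ (q / (4 * a)) ^ (-γ) * √τ := by
        refine mul_le_mul_of_nonneg_right ?_ (sqrt_nonneg _)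
        exact rpow_le_rpow_of_nonpos (by positivity) (by linarith) (by linarith)
    _ = 8 ^ γ * ((a / τ) ^ γ * √τ) * (τ / (2 * q)) ^ γ := by
        rw [rpow_neg (by positivity), ← inv_rpow (by positivity), inv_div, hlower]
        ring
    _ ≤ 8 ^ γ * √a * (1 + q / τ) ^ (-γ) := by gcongr

lemma integral_exp_mul_rpow_neg_le_sqrt_mul {γ a : ℝ} (hγ : 1 / 2 < γ) (ha : 0 < a) {c : ℝ}
    (hc : 0 ≤ c) (z : ℝ) :
    ∫ w : ℝ, exp (-(z - w) ^ 2 / c) * (1 + w ^ 2 / a) ^ (-γ)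
      ≤ √a * ∫ u : ℝ, (1 + u ^ 2) ^ (-γ) := by
  rw [← integral_one_add_sq_div_rpow_neg γ ha]
  refine integral_mono_of_nonneg (ae_of_all _ fun w => by positivity)
    (integrable_one_add_sq_div_rpow_neg hγ ha) (ae_of_all _ fun w => ?_)
  refine mul_le_of_le_one_left (by positivity) (exp_le_one_iff.mpr ?_)
  rw [neg_div]
  exact neg_nonpos.mpr (div_nonneg (sq_nonneg _) hc)

lemma integral_exp_mul_rpow_neg_le {γ a c : ℝ} (hγ : 1 / 2 < γ) (ha : 0 < a) (hc : 0 < c) (z : ℝ) :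
    ∫ w : ℝ, exp (-(z - w) ^ 2 / c) * (1 + w ^ 2 / a) ^ (-γ)
      ≤ (1 + z ^ 2 / (4 * a)) ^ (-γ) * √(π * c)
        + exp (-(z ^ 2 / (4 * c))) * (√a * ∫ u : ℝ, (1 + u ^ 2) ^ (-γ)) := by
  have hgauss := (integrable_exp_neg_sub_sq_div hc z).const_mul ((1 + z ^ 2 / (4 * a)) ^ (-γ))
  have halg := (integrable_one_add_sq_div_rpow_neg hγ ha).const_mul (exp (-(z ^ 2 / (4 * c))))
  rw [← integral_exp_neg_sub_sq_div c z, ← integral_one_add_sq_div_rpow_neg γ ha,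
    ← integral_const_mul, ← integral_const_mul, ← integral_add hgauss halg]
  exact integral_mono_of_nonneg (ae_of_all _ fun w => by positivity) (hgauss.add halg)
    (ae_of_all _ fun w => exp_mul_rpow_neg_le_add (by linarith) ha hc z w)

lemma one_le_two_rpow_mul_one_add_div_rpow_neg {γ τ q : ℝ} (hγ : 0 ≤ γ) (hτ : 0 < τ) (hq : 0 ≤ q)
    (hqτ : q ≤ τ) : 1 ≤ 2 ^ γ * (1 + q / τ) ^ (-γ) := by
  have h : (2 : ℝ) ^ (-γ) ≤ (1 + q / τ) ^ (-γ) :=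
    rpow_le_rpow_of_nonpos (by positivity) (by linarith [div_le_one_of_le₀ hqτ hτ.le]) (by linarith)
  calc (1 : ℝ) = 2 ^ γ * 2 ^ (-γ) := by rw [rpow_neg zero_le_two, mul_inv_cancel₀ (by positivity)]
    _ ≤ 2 ^ γ * (1 + q / τ) ^ (-γ) := by gcongr

theorem exists_integral_exp_mul_rpow_neg_le {D γ : ℝ} (hD : 0 < D) (hγ : 1 / 2 < γ) :
    ∃ K > 0, ∀ a τ c z : ℝ, 0 < a → a ≤ τ → 0 < c → c ≤ D * τ →
      ∫ w : ℝ, exp (-(z - w) ^ 2 / c) * (1 + w ^ 2 / a) ^ (-γ)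
        ≤ K * √a * (1 + z ^ 2 / τ) ^ (-γ) := by
  obtain ⟨C, hC, hdecay⟩ := exists_exp_neg_div_le_mul_rpow_neg (mul_pos four_pos hD) γ
  set I := ∫ u : ℝ, (1 + u ^ 2) ^ (-γ)
  have hI : 0 ≤ I := integral_nonneg fun u => by positivity
  refine ⟨2 ^ γ * I + (8 ^ γ * √(π * D) + C * I), by positivity,
    fun a τ c z ha haτ hc hcτ => ?_⟩
  have hτ : 0 < τ := ha.trans_le haτ
  set B := (1 + z ^ 2 / τ) ^ (-γ)
  have hB : 0 ≤ B := by positivity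
  rcases le_or_gt (z ^ 2) τ with hz | hz
  · have hnear :=
      one_le_two_rpow_mul_one_add_div_rpow_neg (by linarith : (0 : ℝ) ≤ γ) hτ (sq_nonneg z) hz
    calc _ ≤ √a * I := integral_exp_mul_rpow_neg_le_sqrt_mul hγ ha hc.le z
      _ ≤ √a * I * (2 ^ γ * B) := le_mul_of_one_le_right (by positivity) hnear
      _ = 2 ^ γ * I * √a * B := by ring
      _ ≤ _ := by
          gcongr ?_ * _ * _
          exact le_add_of_nonneg_right (by positivity : (0 : ℝ) ≤ 8 ^ γ * √(π * D) + C * I)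
  · have hsqrt : √(π * c) ≤ √(π * D) * √τ := by
      rw [← sqrt_mul (by positivity)]
      exact sqrt_le_sqrt (by rw [mul_assoc]; gcongr)
    have hgauss : (1 + z ^ 2 / (4 * a)) ^ (-γ) * √(π * c) ≤ 8 ^ γ * √(π * D) * √a * B := by
      calc _ ≤ (1 + z ^ 2 / (4 * a)) ^ (-γ) * (√(π * D) * √τ) := by gcongr
        _ = √(π * D) * ((1 + z ^ 2 / (4 * a)) ^ (-γ) * √τ) := by ring
        _ ≤ √(π * D) * (8 ^ γ * √a * B) :=
            mul_le_mul_of_nonneg_left (one_add_div_rpow_neg_mul_sqrt_le hγ.le ha haτ hz.le)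
              (sqrt_nonneg _)
        _ = _ := by ring
    have htail : exp (-(z ^ 2 / (4 * c))) ≤ C * B := by
      calc _ ≤ exp (-(z ^ 2 / τ / (4 * D))) := by
            rw [exp_le_exp, neg_le_neg_iff, div_div, div_le_div_iff_of_pos_left]
            all_goals nlinarith [sq_nonneg z]
        _ ≤ C * B := hdecay _ (by positivity)
    calc _ ≤ _ := integral_exp_mul_rpow_neg_le hγ ha hc z
      _ ≤ 8 ^ γ * √(π * D) * √a * B + C * B * (√a * I) := by gcongr
      _ = (8 ^ γ * √(π * D) + C * I) * √a * B := by ring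
      _ ≤ _ := by
          gcongr ?_ * _ * _
          exact le_add_of_nonneg_left (by positivity : (0 : ℝ) ≤ 2 ^ γ * I)

lemma rpow_neg_le_two_rpow_mul_rpow_neg {α τ m : ℝ} (hα : 0 ≤ α) (hτ : 0 < τ) (hm : τ / 2 ≤ m) :
    m ^ (-α) ≤ 2 ^ α * τ ^ (-α) := by
  calc m ^ (-α) ≤ (τ / 2) ^ (-α) := rpow_le_rpow_of_nonpos (by positivity) hm (by linarith)
    _ = 2 ^ α * τ ^ (-α) := by
        rw [div_rpow hτ.le zero_le_two, rpow_neg zero_le_two, div_inv_eq_mul, mul_comm]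

theorem exists_integral_heat_mul_diffusive_le {D α γ : ℝ} (hD : 0 < D) (hα : 0 ≤ α)
    (hγ : 1 / 2 < γ) (lam β : ℝ) :
    ∃ K > 0, ∀ t s x : ℝ, 0 ≤ s → s ≤ t / 2 →
      ∫ y : ℝ, (1 + t - s) ^ (-α) * exp (-(x - y - lam * (t - s)) ^ 2 / (D * (1 + t - s)))
          * (1 + s) ^ (-β) * (1 + (y - lam * s) ^ 2 / (1 + s)) ^ (-γ)
        ≤ K * (1 + t) ^ (-α) * (1 + (x - lam * t) ^ 2 / (1 + t)) ^ (-γ)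
          * (1 + s) ^ (-(β - 1 / 2)) := by
  obtain ⟨K, hK, hconv⟩ := exists_integral_exp_mul_rpow_neg_le hD hγ
  refine ⟨2 ^ α * K, by positivity, fun t s x hs hst => ?_⟩
  set z := x - lam * t
  have ha : 0 < 1 + s := by linarith
  have hτ : 0 < 1 + t := by linarith
  have hm : 0 < 1 + t - s := by linarith
  -- in the frame moving with speed `lam`, the integrand is a convolution in `w = y - lam * s`
  have hshift : ∫ y : ℝ, (1 + t - s) ^ (-α)
        * exp (-(x - y - lam * (t - s)) ^ 2 / (D * (1 + t - s)))
        * (1 + s) ^ (-β) * (1 + (y - lam * s) ^ 2 / (1 + s)) ^ (-γ)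
      = (1 + t - s) ^ (-α) * (1 + s) ^ (-β) * ∫ w : ℝ,
          exp (-(z - w) ^ 2 / (D * (1 + t - s))) * (1 + w ^ 2 / (1 + s)) ^ (-γ) := by
    rw [← integral_const_mul]
    conv_rhs => rw [← integral_sub_right_eq_self _ (lam * s)]
    congr 1 with y
    rw [show z - (y - lam * s) = x - y - lam * (t - s) by ring]
    ring
  have hconv' := hconv (1 + s) (1 + t) (D * (1 + t - s)) z ha (by linarith)
    (mul_pos hD hm) (mul_le_mul_of_nonneg_left (by linarith) hD.le)
  have htime := rpow_neg_le_two_rpow_mul_rpow_neg hα hτ (m := 1 + t - s) (by linarith)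
  have hsqrt : √(1 + s) * (1 + s) ^ (-β) = (1 + s) ^ (-(β - 1 / 2)) := by
    rw [sqrt_eq_rpow, ← rpow_add ha]
    ring_nf
  rw [hshift]
  calc _ ≤ (1 + t - s) ^ (-α) * (1 + s) ^ (-β)
        * (K * √(1 + s) * (1 + z ^ 2 / (1 + t)) ^ (-γ)) := by gcongr
    _ ≤ 2 ^ α * (1 + t) ^ (-α) * (1 + s) ^ (-β)
        * (K * √(1 + s) * (1 + z ^ 2 / (1 + t)) ^ (-γ)) := by gcongr
    _ = _ := by rw [← hsqrt]; ring

lemma intervalIntegrable_one_add_rpow (r : ℝ) {u : ℝ} (hu : 0 ≤ u) :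
    IntervalIntegrable (fun s : ℝ => (1 + s) ^ r) volume 0 u := by
  refine (ContinuousOn.rpow_const (by fun_prop) fun s hs => Or.inl ?_).intervalIntegrable
  rw [Set.uIcc_of_le hu] at hs
  linarith [hs.1]

theorem stmt11_general (lam D α β γ : ℝ) (hD : 0 < D) (hα : 0 ≤ α)
    (hγ : 1 / 2 < γ) :
    ∃ C > (0:ℝ), ∀ t ≥ (0:ℝ), ∀ x : ℝ,
      (∫ s in (0:ℝ)..(t / 2), ∫ y : ℝ,
          (1 + t - s) ^ (-α)
            * Real.exp (-(x - y - lam * (t - s)) ^ 2 / (D * (1 + t - s)))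
            * (1 + s) ^ (-β) * (1 + (y - lam * s) ^ 2 / (1 + s)) ^ (-γ))
        ≤ C * (1 + t) ^ (-α) * (1 + (x - lam * t) ^ 2 / (1 + t)) ^ (-γ)
            * ∫ s in (0:ℝ)..t, (1 + s) ^ (-(β - 1 / 2)) := by
  obtain ⟨K, hK, hinner⟩ := exists_integral_heat_mul_diffusive_le hD hα hγ lam β
  refine ⟨K, hK, fun t ht x => ?_⟩
  set A := K * (1 + t) ^ (-α) * (1 + (x - lam * t) ^ 2 / (1 + t)) ^ (-γ)
  have ht2 : 0 ≤ t / 2 := by linarith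
  calc _ ≤ ∫ s in (0 : ℝ)..(t / 2), A * (1 + s) ^ (-(β - 1 / 2)) := by
        rw [intervalIntegral.integral_of_le ht2, intervalIntegral.integral_of_le ht2]
        refine setIntegral_mono_of_nonneg (fun s hs => integral_nonneg fun y => ?_)
          (fun s hs => hinner t s x hs.1.le hs.2)
          ((intervalIntegrable_one_add_rpow _ ht2).const_mul A).1
        have : 0 < 1 + t - s := by linarith [hs.2]
        have : 0 < 1 + s := by linarith [hs.1]
        positivity
    _ = A * ∫ s in (0 : ℝ)..(t / 2), (1 + s) ^ (-(β - 1 / 2)) :=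
        intervalIntegral.integral_const_mul _ _
    _ ≤ A * ∫ s in (0 : ℝ)..t, (1 + s) ^ (-(β - 1 / 2)) := by
        gcongr
        refine intervalIntegral.integral_mono_interval le_rfl ht2 (by linarith) ?_
          (intervalIntegrable_one_add_rpow _ ht)
        refine (ae_restrict_iff' measurableSet_Ioc).mpr (ae_of_all _ fun s hs => ?_)
        have : 0 < 1 + s := by linarith [hs.1]
        positivity

theorem stmt11 (lam D α β γ : ℝ) (hD : 0 < D) (hα : 0 ≤ α) (hβ : 1 ≤ β)
    (hγ : 1 / 2 < γ) :
    ∃ C > (0:ℝ), ∀ t ≥ (0:ℝ), ∀ x : ℝ,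
      (∫ s in (0:ℝ)..(t / 2), ∫ y : ℝ,
          (1 + t - s) ^ (-α)
            * Real.exp (-(x - y - lam * (t - s)) ^ 2 / (D * (1 + t - s)))
            * (1 + s) ^ (-β) * (1 + (y - lam * s) ^ 2 / (1 + s)) ^ (-γ))
        ≤ C * (1 + t) ^ (-α) * (1 + (x - lam * t) ^ 2 / (1 + t)) ^ (-γ)
            * ∫ s in (0:ℝ)..t, (1 + s) ^ (-(β - 1 / 2)) :=
  stmt11_general lam D α β γ hD hα hγ
end
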